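/- arXiv:1710.09333 — 4 statements merged into one kernel-verified Lean document; each statement's English description precedes it below -/
import Mathlib

section
/- For every λ > 0, the critical soliton φ_λ realizes equality in the sharp Gagliardo–Nirenberg inequality on ℝ at exponent 6: ∫_ℝ φ_λ(x)^6 dx = (4/π²) · (∫_ℝ φ_λ(x)² dx)² · ∫_ℝ φ_λ'(x)² dx, where φ_λ' denotes the derivative of φ_λ. -/
/-!
For `f x = A cosh(a x)^(-1/2)` one has `f² = A² sech(a x)`, `f⁶ = A⁶ sech³(a x)` and
`f'² = (A a / 2)² (sech - sech³)(a x)`. Everything thus reduces to `∫ sech = π`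
(antiderivative `arctan ∘ sinh`) and `∫ sech³ = π / 2`, which holds because `sinh / cosh²`
is an integrable antiderivative of `2 sech³ - sech`. Both sides of the identity scale alike in
`A` and `a`, so it holds for every amplitude and every `a > 0`.
-/

open MeasureTheory

/-- The critical soliton `φ_λ(x) = (3λ)^{1/4} (cosh(2√λ x))^{-1/2}`. -/
noncomputable def criticalSoliton (lam : ℝ) : ℝ → ℝ :=
  fun x => (3 * lam) ^ ((1 : ℝ) / 4) * Real.cosh (2 * Real.sqrt lam * x) ^ (-(1 : ℝ) / 2)

open Real Filter Topology

namespace Real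

lemma one_add_sq_div_two_le_cosh (x : ℝ) : 1 + x ^ 2 / 2 ≤ cosh x := by
  have h := sum_le_hasSum (Finset.range 2)
    (fun n _ => div_nonneg (by rw [pow_mul]; positivity) (by positivity)) (hasSum_cosh x)
  norm_num [Finset.sum_range_succ] at h
  linarith

lemma integrable_inv_cosh : Integrable fun x : ℝ => (cosh x)⁻¹ := by
  refine (integrable_inv_one_add_sq.const_mul 2).mono' (by fun_prop) (ae_of_all _ fun x => ?_)
  rw [Real.norm_eq_abs, abs_of_pos (inv_pos.2 (cosh_pos x)), ← div_eq_mul_inv]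
  calc (cosh x)⁻¹ ≤ (1 + x ^ 2 / 2)⁻¹ := by gcongr; exact one_add_sq_div_two_le_cosh x
    _ ≤ 2 / (1 + x ^ 2) := by
      rw [inv_eq_one_div, div_le_div_iff₀ (by positivity) (by positivity)]
      linarith

lemma inv_cosh_pow_three_le_inv_cosh (x : ℝ) : (cosh x ^ 3)⁻¹ ≤ (cosh x)⁻¹ :=
  inv_anti₀ (cosh_pos x) (le_self_pow₀ (one_le_cosh x) (by norm_num))

lemma integrable_inv_cosh_pow_three : Integrable fun x : ℝ => (cosh x ^ 3)⁻¹ :=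
  integrable_inv_cosh.mono' (by fun_prop) (ae_of_all _ fun x => by
    rw [Real.norm_eq_abs, abs_of_pos (by have := cosh_pos x; positivity)]
    exact inv_cosh_pow_three_le_inv_cosh x)

lemma abs_sinh_le_cosh (x : ℝ) : |sinh x| ≤ cosh x := by
  rw [abs_sinh, ← cosh_abs x]
  exact (sinh_lt_cosh _).le

lemma integrable_sinh_div_cosh_sq : Integrable fun x : ℝ => sinh x / cosh x ^ 2 :=
  integrable_inv_cosh.mono'
    (continuous_sinh.div (continuous_cosh.pow 2) fun x =>
      (pow_pos (cosh_pos x) 2).ne').aestronglyMeasurable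
    (ae_of_all _ fun x => by
      have hc := cosh_pos x
      rw [Real.norm_eq_abs, abs_div, abs_of_pos (by positivity : 0 < cosh x ^ 2),
        div_le_iff₀ (by positivity), sq, ← mul_assoc, inv_mul_cancel₀ hc.ne', one_mul]
      exact abs_sinh_le_cosh x)

lemma hasDerivAt_arctan_sinh (x : ℝ) :
    HasDerivAt (fun x => arctan (sinh x)) (cosh x)⁻¹ x := by
  refine ((hasDerivAt_arctan (sinh x)).comp x (hasDerivAt_sinh x)).congr_deriv ?_
  rw [← cosh_sq']
  field_simp [(cosh_pos x).ne']

lemma hasDerivAt_sinh_div_cosh_sq (x : ℝ) :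
    HasDerivAt (fun x => sinh x / cosh x ^ 2) (2 * (cosh x ^ 3)⁻¹ - (cosh x)⁻¹) x := by
  refine ((hasDerivAt_sinh x).div ((hasDerivAt_cosh x).fun_pow 2)
    (pow_pos (cosh_pos x) 2).ne').congr_deriv ?_
  have := cosh_pos x
  field_simp
  linear_combination 2 * cosh x * cosh_sq x

lemma tendsto_sinh_atTop : Tendsto sinh atTop atTop := sinhOrderIso.tendsto_atTop

lemma tendsto_sinh_atBot : Tendsto sinh atBot atBot := sinhOrderIso.tendsto_atBot

lemma integral_inv_cosh : ∫ x : ℝ, (cosh x)⁻¹ = π := by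
  rw [integral_of_hasDerivAt_of_tendsto hasDerivAt_arctan_sinh integrable_inv_cosh
    ((tendsto_arctan_atBot.mono_right nhdsWithin_le_nhds).comp tendsto_sinh_atBot)
    ((tendsto_arctan_atTop.mono_right nhdsWithin_le_nhds).comp tendsto_sinh_atTop)]
  ring

lemma integral_inv_cosh_pow_three : ∫ x : ℝ, (cosh x ^ 3)⁻¹ = π / 2 := by
  have h := integral_eq_zero_of_hasDerivAt_of_integrable hasDerivAt_sinh_div_cosh_sq
    ((integrable_inv_cosh_pow_three.const_mul 2).sub integrable_inv_cosh)
    integrable_sinh_div_cosh_sq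
  rw [integral_sub (integrable_inv_cosh_pow_three.const_mul 2) integrable_inv_cosh,
    integral_const_mul, integral_inv_cosh] at h
  linarith

end Real

section Profile

variable (A a : ℝ)

lemma mul_cosh_rpow_neg_half_sq (x : ℝ) :
    (A * cosh (a * x) ^ (-(1 : ℝ) / 2)) ^ 2 = A ^ 2 * (cosh (a * x))⁻¹ := by
  rw [mul_pow, ← rpow_mul_natCast (cosh_pos _).le]
  norm_num [rpow_neg_one]

lemma hasDerivAt_mul_cosh_rpow_neg_half (x : ℝ) :
    HasDerivAt (fun x => A * cosh (a * x) ^ (-(1 : ℝ) / 2))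
      (-(A * a / 2) * sinh (a * x) * cosh (a * x) ^ (-(3 : ℝ) / 2)) x := by
  refine ((((hasDerivAt_cosh (a * x)).comp x ((hasDerivAt_id x).const_mul a)).rpow_const
    (p := -(1 : ℝ) / 2) (Or.inl (cosh_pos _).ne')).const_mul A).congr_deriv ?_
  norm_num
  ring

lemma deriv_mul_cosh_rpow_neg_half_sq (x : ℝ) :
    deriv (fun x => A * cosh (a * x) ^ (-(1 : ℝ) / 2)) x ^ 2 =
      A ^ 2 * a ^ 2 / 4 * ((cosh (a * x))⁻¹ - (cosh (a * x) ^ 3)⁻¹) := by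
  rw [(hasDerivAt_mul_cosh_rpow_neg_half A a x).deriv, mul_pow, mul_pow,
    ← rpow_mul_natCast (cosh_pos _).le]
  norm_num [rpow_neg, sinh_sq]
  field_simp [(cosh_pos (a * x)).ne']
  ring

end Profile

theorem cosh_rpow_neg_half_GN_equality {A a : ℝ} (ha : 0 < a) :
    let f := fun x => A * cosh (a * x) ^ (-(1 : ℝ) / 2)
    ∫ x, f x ^ 6 = 4 / π ^ 2 * (∫ x, f x ^ 2) ^ 2 * ∫ x, deriv f x ^ 2 := by
  intro f
  have scale (g : ℝ → ℝ) : ∫ x, g (a * x) = a⁻¹ * ∫ y, g y := by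
    rw [Measure.integral_comp_mul_left, abs_of_pos (inv_pos.2 ha), smul_eq_mul]
  have h2 (x : ℝ) : f x ^ 2 = A ^ 2 * (cosh (a * x))⁻¹ := mul_cosh_rpow_neg_half_sq A a x
  have h6 (x : ℝ) : f x ^ 6 = A ^ 6 * (cosh (a * x) ^ 3)⁻¹ := by
    rw [show f x ^ 6 = (f x ^ 2) ^ 3 by ring, h2]
    ring
  have hd (x : ℝ) :
      deriv f x ^ 2 = A ^ 2 * a ^ 2 / 4 * ((cosh (a * x))⁻¹ - (cosh (a * x) ^ 3)⁻¹) :=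
    deriv_mul_cosh_rpow_neg_half_sq A a x
  simp_rw [h6, h2, hd, integral_const_mul]
  rw [scale fun y => (cosh y ^ 3)⁻¹, scale fun y => (cosh y)⁻¹,
    scale fun y => (cosh y)⁻¹ - (cosh y ^ 3)⁻¹,
    integral_sub integrable_inv_cosh integrable_inv_cosh_pow_three,
    integral_inv_cosh, integral_inv_cosh_pow_three]
  field_simp
  ring

/-- For every `λ > 0`, the critical soliton realizes equality in the sharp
Gagliardo–Nirenberg inequality on ℝ at exponent 6:
`∫ φ_λ^6 = (4/π²) (∫ φ_λ²)² ∫ (φ_λ')²`. -/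
theorem criticalSoliton_GN_equality (lam : ℝ) (hlam : 0 < lam) :
    ∫ x, criticalSoliton lam x ^ 6 =
      (4 / Real.pi ^ 2) * (∫ x, criticalSoliton lam x ^ 2) ^ 2 *
        ∫ x, deriv (criticalSoliton lam) x ^ 2 :=
  cosh_rpow_neg_half_GN_equality (by positivity)
end

section
/- Let 0 < μ ≤ μ_{ℝ⁺} and let u : ℝ → ℝ be continuously differentiable with derivative u', with u and u' square-integrable on [0,∞) and ∫_0^∞ u(x)² dx = μ. Then the critical NLS energy on the half-line satisfies the lower bound E_6(u, [0,∞)) ≥ (1/2)·(1 − μ²/μ_{ℝ⁺}²)·∫_0^∞ u'(x)² dx; in particular E_6(u, [0,∞)) ≥ 0. -/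
/-!
Bogomolny's completing-the-square argument. Let `b = u(x₀)²` be the maximum of `u²` on `[0, ∞)`
and `q = √((b² − u⁴)/3)` (`bogomolnyWeight b (u²)`). Expanding `(u' ∓ u q)² ≥ 0` gives
`u⁶/3 ± 2uu'q ≤ u'² + b²u²/3`, and `2uu'q` is the derivative of `P_b(u²)`, where
`P_b(r) = ∫₀ʳ √((b² − ρ²)/3) dρ` (`bogomolnyPotential b r`). Integrating with the sign `−` on
`[0, x₀]` and `+` on `[x₀, ∞)` yields `∫u⁶/3 + 2 P_b(b) − P_b(u(0)²) ≤ ∫u'² + (b²/3) ∫u²`, and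
`P_b(b) = μ_{ℝ⁺} b²/3` is the area of a quarter disc. As `P_b(u(0)²) ≤ P_b(b)`, this gives
`∫u⁶ ≤ 3 ∫u'²` as soon as `∫u² ≤ μ_{ℝ⁺}`; the bound `∫u⁶ ≤ 3 (μ/μ_{ℝ⁺})² ∫u'²` for mass `μ`
follows by applying it to `u √(μ_{ℝ⁺}/μ)`.
-/

open MeasureTheory Set Filter Topology Real

theorem integrable_mul_of_integrable_sq {α : Type*} [MeasurableSpace α] {ν : Measure α}
    {f g : α → ℝ} (hf : AEStronglyMeasurable f ν) (hg : AEStronglyMeasurable g ν)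
    (hf2 : Integrable (fun x => f x ^ 2) ν) (hg2 : Integrable (fun x => g x ^ 2) ν) :
    Integrable (fun x => f x * g x) ν :=
  ((memLp_two_iff_integrable_sq hf).2 hf2).integrable_mul
    ((memLp_two_iff_integrable_sq hg).2 hg2)

theorem integrable_pow_six_of_sq_le {α : Type*} [MeasurableSpace α] {ν : Measure α} {u : α → ℝ}
    {b : ℝ} (hu : AEStronglyMeasurable u ν) (hu2 : Integrable (fun x => u x ^ 2) ν)
    (hb : ∀ᵐ x ∂ν, u x ^ 2 ≤ b) : Integrable (fun x => u x ^ 6) ν := by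
  have hu4 : AEStronglyMeasurable (fun x => u x ^ 4) ν := hu.pow 4
  refine (hu2.bdd_mul (c := b ^ 2) hu4 (hb.mono fun x hx => ?_)).congr
    (ae_of_all _ fun x => by ring)
  rw [Real.norm_eq_abs, abs_of_nonneg (by positivity)]
  nlinarith [sq_nonneg (u x)]

theorem measurable_of_hasDerivAt {f f' : ℝ → ℝ} (hf : ∀ x, HasDerivAt f (f' x) x) :
    Measurable f' := by
  rw [show f' = deriv f from funext fun x => (hf x).deriv.symm]
  exact measurable_deriv f

theorem tendsto_sq_atTop_zero_of_integrableOn_Ioi {u u' : ℝ → ℝ} {a : ℝ}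
    (hderiv : ∀ x, HasDerivAt u (u' x) x) (hu2 : IntegrableOn (fun x => u x ^ 2) (Ioi a))
    (hu'2 : IntegrableOn (fun x => u' x ^ 2) (Ioi a)) :
    Tendsto (fun x => u x ^ 2) atTop (𝓝 0) := by
  have hu : Continuous u := continuous_iff_continuousAt.2 fun x => (hderiv x).continuousAt
  refine tendsto_zero_of_hasDerivAt_of_integrableOn_Ioi (f' := fun x => 2 * (u x * u' x))
    (fun x _ => ?_) ?_ hu2
  · simpa [mul_assoc] using (hderiv x).fun_pow 2
  · exact (integrable_mul_of_integrable_sq hu.aestronglyMeasurable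
      (measurable_of_hasDerivAt hderiv).aestronglyMeasurable hu2 hu'2).const_mul 2

theorem exists_isMaxOn_Ici_of_tendsto_zero {f : ℝ → ℝ} {a : ℝ} (hf : Continuous f)
    (hf0 : ∀ x, 0 ≤ f x) (hlim : Tendsto f atTop (𝓝 0)) : ∃ x₀ ∈ Ici a, IsMaxOn f (Ici a) x₀ := by
  by_cases hpos : ∃ x₁ ∈ Ici a, 0 < f x₁
  · obtain ⟨x₁, hx₁, hfx₁⟩ := hpos
    refine hf.continuousOn.exists_isMaxOn' isClosed_Ici hx₁ ?_
    rw [cocompact_eq_atBot_atTop, inf_sup_right, eventually_sup]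
    constructor
    · exact eventually_inf_principal.2
        ((eventually_lt_atBot a).mono fun x hx hxa => absurd hxa (not_le.2 hx))
    · exact (inf_le_left : atTop ⊓ 𝓟 (Ici a) ≤ atTop)
        ((hlim.eventually (gt_mem_nhds hfx₁)).mono fun x hx => hx.le)
  · push Not at hpos
    exact ⟨a, self_mem_Ici, fun x hx => (hpos x hx).trans (hf0 a)⟩

theorem setIntegral_Ici_eq_add {f : ℝ → ℝ} {a c : ℝ} (hac : a ≤ c)
    (hf : IntegrableOn f (Ici a)) :
    ∫ x in Ici a, f x = (∫ x in Ioc a c, f x) + ∫ x in Ioi c, f x := by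
  rw [integral_Ici_eq_integral_Ioi, ← setIntegral_union Ioc_disjoint_Ioi_same measurableSet_Ioi
    (hf.mono_set (Ioc_subset_Ioi_self.trans Ioi_subset_Ici_self))
    (hf.mono_set (Ioi_subset_Ici hac)), Ioc_union_Ioi_eq_Ioi hac]

theorem integral_sqrt_one_sub_sq_zero_one : ∫ s in (0 : ℝ)..1, √(1 - s ^ 2) = π / 4 := by
  have hcont : Continuous fun s : ℝ => √(1 - s ^ 2) := by fun_prop
  have heven : ∫ s in (-1 : ℝ)..0, √(1 - s ^ 2) = ∫ s in (0 : ℝ)..1, √(1 - s ^ 2) := by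
    have h := intervalIntegral.integral_comp_neg (a := (0 : ℝ)) (b := 1) fun s => √(1 - s ^ 2)
    simp only [neg_sq, neg_zero] at h
    exact h.symm
  have hfull := integral_sqrt_one_sub_sq
  rw [← intervalIntegral.integral_add_adjacent_intervals (hcont.intervalIntegrable (-1) 0)
    (hcont.intervalIntegrable 0 1), heven] at hfull
  linarith

theorem integral_sqrt_sq_sub_sq {b : ℝ} (hb : 0 ≤ b) :
    ∫ r in (0 : ℝ)..b, √(b ^ 2 - r ^ 2) = π * b ^ 2 / 4 := by
  have hscale := intervalIntegral.smul_integral_comp_mul_left (a := 0) (b := 1)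
    (fun r => √(b ^ 2 - r ^ 2)) b
  have hfactor : ∀ s, √(b ^ 2 - (b * s) ^ 2) = b * √(1 - s ^ 2) := fun s => by
    rw [show b ^ 2 - (b * s) ^ 2 = b ^ 2 * (1 - s ^ 2) by ring, Real.sqrt_mul (sq_nonneg b),
      Real.sqrt_sq hb]
  simp only [mul_zero, mul_one, smul_eq_mul, hfactor, intervalIntegral.integral_const_mul,
    integral_sqrt_one_sub_sq_zero_one] at hscale
  rw [← hscale]
  ring

noncomputable def halfLineCriticalMass : ℝ := √3 * π / 4

noncomputable def bogomolnyWeight (b r : ℝ) : ℝ := √((b ^ 2 - r ^ 2) / 3)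

noncomputable def bogomolnyPotential (b r : ℝ) : ℝ := ∫ ρ in 0..r, bogomolnyWeight b ρ

theorem continuous_bogomolnyWeight (b : ℝ) : Continuous (bogomolnyWeight b) := by
  unfold bogomolnyWeight
  fun_prop

theorem sq_bogomolnyWeight {b r : ℝ} (h : r ^ 2 ≤ b ^ 2) :
    bogomolnyWeight b r ^ 2 = (b ^ 2 - r ^ 2) / 3 :=
  Real.sq_sqrt (div_nonneg (sub_nonneg.2 h) zero_le_three)

theorem norm_bogomolnyWeight_le (b r : ℝ) : ‖bogomolnyWeight b r‖ ≤ √(b ^ 2 / 3) := by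
  rw [bogomolnyWeight, Real.norm_eq_abs, abs_of_nonneg (Real.sqrt_nonneg _)]
  gcongr
  nlinarith [sq_nonneg r]

theorem hasDerivAt_bogomolnyPotential (b r : ℝ) :
    HasDerivAt (bogomolnyPotential b) (bogomolnyWeight b r) r :=
  ((continuous_bogomolnyWeight b).integral_hasStrictDerivAt 0 r).hasDerivAt

theorem hasDerivAt_bogomolnyPotential_comp_sq {u : ℝ → ℝ} {u' x : ℝ} (b : ℝ)
    (hu : HasDerivAt u u' x) :
    HasDerivAt (fun x => bogomolnyPotential b (u x ^ 2))
      (bogomolnyWeight b (u x ^ 2) * (2 * u x * u')) x := by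
  simpa [mul_assoc, Function.comp_def] using
    (hasDerivAt_bogomolnyPotential b _).comp x (hu.fun_pow 2)

theorem continuous_bogomolnyPotential (b : ℝ) : Continuous (bogomolnyPotential b) :=
  continuous_iff_continuousAt.2 fun r => (hasDerivAt_bogomolnyPotential b r).continuousAt

theorem bogomolnyPotential_zero (b : ℝ) : bogomolnyPotential b 0 = 0 :=
  intervalIntegral.integral_same

theorem monotone_bogomolnyPotential (b : ℝ) : Monotone (bogomolnyPotential b) :=
  monotone_of_deriv_nonneg (fun r => (hasDerivAt_bogomolnyPotential b r).differentiableAt)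
    fun r => (hasDerivAt_bogomolnyPotential b r).deriv ▸ Real.sqrt_nonneg _

theorem bogomolnyPotential_self {b : ℝ} (hb : 0 ≤ b) :
    bogomolnyPotential b b = halfLineCriticalMass * (b ^ 2 / 3) := by
  simp only [bogomolnyPotential, bogomolnyWeight, halfLineCriticalMass,
    Real.sqrt_div' _ zero_le_three, intervalIntegral.integral_div, integral_sqrt_sq_sub_sq hb]
  have h3 : √3 ^ 2 = 3 := Real.sq_sqrt zero_le_three
  field_simp
  rw [h3]

theorem integrable_bogomolnyWeight_mul {α : Type*} [MeasurableSpace α] {ν : Measure α}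
    {u u' : α → ℝ} (b : ℝ) (hu : AEStronglyMeasurable u ν) (hu' : AEStronglyMeasurable u' ν)
    (hu2 : Integrable (fun x => u x ^ 2) ν) (hu'2 : Integrable (fun x => u' x ^ 2) ν) :
    Integrable (fun x => bogomolnyWeight b (u x ^ 2) * (2 * u x * u' x)) ν := by
  refine Integrable.bdd_mul ?_ ((continuous_bogomolnyWeight b).comp_aestronglyMeasurable
    (hu.pow 2)) (ae_of_all _ fun x => norm_bogomolnyWeight_le b _)
  simpa only [mul_assoc] using (integrable_mul_of_integrable_sq hu hu' hu2 hu'2).const_mul 2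

theorem pow_six_div_three_add_abs_le {v p q b : ℝ} (hq : q ^ 2 = (b ^ 2 - (v ^ 2) ^ 2) / 3) :
    v ^ 6 / 3 + |q * (2 * v * p)| ≤ p ^ 2 + b ^ 2 / 3 * v ^ 2 := by
  rcases abs_cases (q * (2 * v * p)) with ⟨h, -⟩ | ⟨h, -⟩ <;> rw [h]
  · linear_combination sq_nonneg (p - v * q) + v ^ 2 * hq
  · linear_combination sq_nonneg (p + v * q) + v ^ 2 * hq

theorem integral_pow_six_div_three_add_abs_le {α : Type*} [MeasurableSpace α] {ν : Measure α}
    {u u' q : α → ℝ} {b : ℝ} (hq : ∀ᵐ x ∂ν, q x ^ 2 = (b ^ 2 - (u x ^ 2) ^ 2) / 3)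
    (hu2 : Integrable (fun x => u x ^ 2) ν) (hu'2 : Integrable (fun x => u' x ^ 2) ν)
    (hu6 : Integrable (fun x => u x ^ 6) ν)
    (hcross : Integrable (fun x => q x * (2 * u x * u' x)) ν) :
    (∫ x, u x ^ 6 ∂ν) / 3 + |∫ x, q x * (2 * u x * u' x) ∂ν| ≤
      ∫ x, u' x ^ 2 ∂ν + b ^ 2 / 3 * ∫ x, u x ^ 2 ∂ν :=
  calc (∫ x, u x ^ 6 ∂ν) / 3 + |∫ x, q x * (2 * u x * u' x) ∂ν|
      ≤ ∫ x, (u x ^ 6 / 3 + |q x * (2 * u x * u' x)|) ∂ν := by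
        rw [integral_add (hu6.div_const 3) hcross.abs, integral_div]
        gcongr
        exact abs_integral_le_integral_abs
    _ ≤ ∫ x, (u' x ^ 2 + b ^ 2 / 3 * u x ^ 2) ∂ν :=
        integral_mono_ae ((hu6.div_const 3).add hcross.abs) (hu'2.add (hu2.const_mul _))
          (hq.mono fun x hx => pow_six_div_three_add_abs_le hx)
    _ = ∫ x, u' x ^ 2 ∂ν + b ^ 2 / 3 * ∫ x, u x ^ 2 ∂ν := by
        rw [integral_add hu'2 (hu2.const_mul _), integral_const_mul]

theorem integral_pow_six_div_three_add_bogomolnyPotential_le {u u' : ℝ → ℝ} {x₀ : ℝ}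
    (hderiv : ∀ x, HasDerivAt u (u' x) x) (hu2 : IntegrableOn (fun x => u x ^ 2) (Ici 0))
    (hu'2 : IntegrableOn (fun x => u' x ^ 2) (Ici 0)) (hx₀ : 0 ≤ x₀)
    (hmax : IsMaxOn (fun x => u x ^ 2) (Ici 0) x₀) :
    (∫ x in Ici 0, u x ^ 6) / 3 + 2 * bogomolnyPotential (u x₀ ^ 2) (u x₀ ^ 2)
        - bogomolnyPotential (u x₀ ^ 2) (u 0 ^ 2) ≤
      (∫ x in Ici 0, u' x ^ 2) + (u x₀ ^ 2) ^ 2 / 3 * ∫ x in Ici 0, u x ^ 2 := by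
  set b := u x₀ ^ 2
  set q : ℝ → ℝ := fun x => bogomolnyWeight b (u x ^ 2)
  have hu : Continuous u := continuous_iff_continuousAt.2 fun x => (hderiv x).continuousAt
  have hq : ∀ x ∈ Ici (0 : ℝ), q x ^ 2 = (b ^ 2 - (u x ^ 2) ^ 2) / 3 := fun x hx =>
    sq_bogomolnyWeight (pow_le_pow_left₀ (sq_nonneg _) (hmax hx) 2)
  have hP : ∀ x, HasDerivAt (fun x => bogomolnyPotential b (u x ^ 2)) (q x * (2 * u x * u' x)) x :=
    fun x => hasDerivAt_bogomolnyPotential_comp_sq b (hderiv x)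
  have hcross : IntegrableOn (fun x => q x * (2 * u x * u' x)) (Ici 0) :=
    integrable_bogomolnyWeight_mul b hu.aestronglyMeasurable
      (measurable_of_hasDerivAt hderiv).aestronglyMeasurable hu2 hu'2
  have hu6 : IntegrableOn (fun x => u x ^ 6) (Ici 0) :=
    integrable_pow_six_of_sq_le hu.aestronglyMeasurable hu2
      (ae_restrict_of_forall_mem measurableSet_Ici fun x hx => hmax hx)
  have hIoc : Ioc 0 x₀ ⊆ Ici (0 : ℝ) := Ioc_subset_Ioi_self.trans Ioi_subset_Ici_self
  have hIoi : Ioi x₀ ⊆ Ici (0 : ℝ) := Ioi_subset_Ici hx₀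
  have hleft := integral_pow_six_div_three_add_abs_le
    (ae_restrict_of_forall_mem measurableSet_Ioc fun x hx => hq x (hIoc hx))
    (hu2.mono_set hIoc) (hu'2.mono_set hIoc) (hu6.mono_set hIoc) (hcross.mono_set hIoc)
  have hright := integral_pow_six_div_three_add_abs_le
    (ae_restrict_of_forall_mem measurableSet_Ioi fun x hx => hq x (hIoi hx))
    (hu2.mono_set hIoi) (hu'2.mono_set hIoi) (hu6.mono_set hIoi) (hcross.mono_set hIoi)
  have hFTC_left : ∫ x in Ioc 0 x₀, q x * (2 * u x * u' x) =
      bogomolnyPotential b b - bogomolnyPotential b (u 0 ^ 2) := by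
    rw [← intervalIntegral.integral_of_le hx₀, intervalIntegral.integral_eq_sub_of_hasDerivAt
      (fun x _ => hP x) ((intervalIntegrable_iff_integrableOn_Ioc_of_le hx₀).2
        (hcross.mono_set hIoc))]
  have hFTC_right : ∫ x in Ioi x₀, q x * (2 * u x * u' x) = 0 - bogomolnyPotential b b := by
    have htend := tendsto_sq_atTop_zero_of_integrableOn_Ioi hderiv (hu2.mono_set hIoi)
      (hu'2.mono_set hIoi)
    refine integral_Ioi_of_hasDerivAt_of_tendsto' (fun x _ => hP x) (hcross.mono_set hIoi) ?_
    simpa [bogomolnyPotential_zero, Function.comp_def] using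
      ((continuous_bogomolnyPotential b).tendsto 0).comp htend
  rw [hFTC_left] at hleft
  rw [hFTC_right] at hright
  rw [setIntegral_Ici_eq_add hx₀ hu6, setIntegral_Ici_eq_add hx₀ hu'2,
    setIntegral_Ici_eq_add hx₀ hu2]
  linarith [le_abs_self (bogomolnyPotential b b - bogomolnyPotential b (u 0 ^ 2)),
    neg_le_abs (0 - bogomolnyPotential b b)]

theorem integral_pow_six_le_of_mass_le {u u' : ℝ → ℝ} (hderiv : ∀ x, HasDerivAt u (u' x) x)
    (hu2 : IntegrableOn (fun x => u x ^ 2) (Ici 0))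
    (hu'2 : IntegrableOn (fun x => u' x ^ 2) (Ici 0))
    (hmass : ∫ x in Ici 0, u x ^ 2 ≤ halfLineCriticalMass) :
    ∫ x in Ici 0, u x ^ 6 ≤ 3 * ∫ x in Ici 0, u' x ^ 2 := by
  have hu : Continuous u := continuous_iff_continuousAt.2 fun x => (hderiv x).continuousAt
  obtain ⟨x₀, hx₀, hmax⟩ := exists_isMaxOn_Ici_of_tendsto_zero (by fun_prop)
    (fun x => sq_nonneg (u x)) (tendsto_sq_atTop_zero_of_integrableOn_Ioi hderiv
      (hu2.mono_set Ioi_subset_Ici_self) (hu'2.mono_set Ioi_subset_Ici_self))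
  have hbogomolny :=
    integral_pow_six_div_three_add_bogomolnyPotential_le hderiv hu2 hu'2 hx₀ hmax
  have hmono := monotone_bogomolnyPotential (u x₀ ^ 2) (hmax (self_mem_Ici : (0 : ℝ) ∈ Ici 0))
  rw [bogomolnyPotential_self (sq_nonneg _)] at hbogomolny hmono
  have := mul_le_mul_of_nonneg_left hmass (by positivity : 0 ≤ (u x₀ ^ 2) ^ 2 / 3)
  linarith

theorem integral_pow_six_le {u u' : ℝ → ℝ} (hderiv : ∀ x, HasDerivAt u (u' x) x)
    (hu2 : IntegrableOn (fun x => u x ^ 2) (Ici 0))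
    (hu'2 : IntegrableOn (fun x => u' x ^ 2) (Ici 0)) (hmass : 0 < ∫ x in Ici 0, u x ^ 2) :
    ∫ x in Ici 0, u x ^ 6 ≤
      3 * ((∫ x in Ici 0, u x ^ 2) ^ 2 / halfLineCriticalMass ^ 2) * ∫ x in Ici 0, u' x ^ 2 := by
  set M := ∫ x in Ici 0, u x ^ 2
  have hμ : 0 < halfLineCriticalMass := by unfold halfLineCriticalMass; positivity
  set c := √(halfLineCriticalMass / M)
  have hc2 : c ^ 2 = halfLineCriticalMass / M := Real.sq_sqrt (by positivity)
  have hscaled := integral_pow_six_le_of_mass_le (u := fun x => c * u x)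
    (u' := fun x => c * u' x) (fun x => (hderiv x).const_mul c)
    (by simp only [mul_pow]; exact hu2.const_mul _)
    (by simp only [mul_pow]; exact hu'2.const_mul _)
    (by simp only [mul_pow]; rw [integral_const_mul, hc2, div_mul_cancel₀ _ hmass.ne'])
  simp only [mul_pow, integral_const_mul] at hscaled
  have hc6 : c ^ 6 = c ^ 2 * (halfLineCriticalMass / M) ^ 2 := by rw [← hc2]; ring
  rw [hc6, mul_assoc] at hscaled
  have hreduced := le_of_mul_le_mul_left (hscaled.trans_eq (mul_left_comm _ _ _))
    (by positivity : 0 < c ^ 2)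
  calc ∫ x in Ici 0, u x ^ 6
      = (M ^ 2 / halfLineCriticalMass ^ 2) *
          ((halfLineCriticalMass / M) ^ 2 * ∫ x in Ici 0, u x ^ 6) := by
        field_simp
    _ ≤ (M ^ 2 / halfLineCriticalMass ^ 2) * (3 * ∫ x in Ici 0, u' x ^ 2) := by gcongr
    _ = _ := by ring

theorem critical_energy_lower_bound_halfline_general
    (μ : ℝ) (hμ0 : 0 < μ) (hμ : μ ≤ Real.sqrt 3 * Real.pi / 4)
    (u u' : ℝ → ℝ)
    (hderiv : ∀ x, HasDerivAt u (u' x) x)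
    (hu2 : IntegrableOn (fun x => u x ^ 2) (Set.Ici 0))
    (hu'2 : IntegrableOn (fun x => u' x ^ 2) (Set.Ici 0))
    (hmass : ∫ x in Set.Ici (0 : ℝ), u x ^ 2 = μ) :
    (1 / 2) * (∫ x in Set.Ici (0 : ℝ), u' x ^ 2) -
        (1 / 6) * (∫ x in Set.Ici (0 : ℝ), |u x| ^ 6) ≥
      (1 / 2) * (1 - μ ^ 2 / (Real.sqrt 3 * Real.pi / 4) ^ 2) *
        ∫ x in Set.Ici (0 : ℝ), u' x ^ 2 ∧
    (1 / 2) * (∫ x in Set.Ici (0 : ℝ), u' x ^ 2) -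
        (1 / 6) * (∫ x in Set.Ici (0 : ℝ), |u x| ^ 6) ≥ 0 := by
  have hsixth := integral_pow_six_le hderiv hu2 hu'2 (hmass ▸ hμ0)
  rw [hmass, halfLineCriticalMass] at hsixth
  have habs : ∫ x in Ici (0 : ℝ), |u x| ^ 6 = ∫ x in Ici (0 : ℝ), u x ^ 6 := by
    simp only [Even.pow_abs (by decide : Even 6)]
  have hK : 0 ≤ ∫ x in Ici (0 : ℝ), u' x ^ 2 :=
    setIntegral_nonneg measurableSet_Ici fun x _ => sq_nonneg _
  have hratio : μ ^ 2 / (√3 * π / 4) ^ 2 ≤ 1 :=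
    div_le_one_of_le₀ (pow_le_pow_left₀ hμ0.le hμ 2) (sq_nonneg _)
  rw [habs]
  constructor <;> nlinarith

/-- For `0 < μ ≤ μ_{ℝ⁺} = √3 π / 4` and `u` continuously differentiable with `u, u'`
square-integrable on `[0,∞)` and mass `∫_0^∞ u² = μ`, the critical NLS energy on the
half-line satisfies `E_6(u,[0,∞)) ≥ (1/2)(1 − μ²/μ_{ℝ⁺}²) ∫_0^∞ (u')²`; in particular
`E_6(u,[0,∞)) ≥ 0`. -/
theorem critical_energy_lower_bound_halfline
    (μ : ℝ) (hμ0 : 0 < μ) (hμ : μ ≤ Real.sqrt 3 * Real.pi / 4)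
    (u u' : ℝ → ℝ)
    (hderiv : ∀ x, HasDerivAt u (u' x) x)
    (hcont : Continuous u')
    (hu2 : IntegrableOn (fun x => u x ^ 2) (Set.Ici 0))
    (hu'2 : IntegrableOn (fun x => u' x ^ 2) (Set.Ici 0))
    (hmass : ∫ x in Set.Ici (0 : ℝ), u x ^ 2 = μ) :
    (1 / 2) * (∫ x in Set.Ici (0 : ℝ), u' x ^ 2) -
        (1 / 6) * (∫ x in Set.Ici (0 : ℝ), |u x| ^ 6) ≥
      (1 / 2) * (1 - μ ^ 2 / (Real.sqrt 3 * Real.pi / 4) ^ 2) *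
        ∫ x in Set.Ici (0 : ℝ), u' x ^ 2 ∧
    (1 / 2) * (∫ x in Set.Ici (0 : ℝ), u' x ^ 2) -
        (1 / 6) * (∫ x in Set.Ici (0 : ℝ), |u x| ^ 6) ≥ 0 :=
  critical_energy_lower_bound_halfline_general μ hμ0 hμ u u' hderiv hu2 hu'2 hmass
end

section
/- Let 0 < μ < μ_{ℝ⁺} and let u : ℝ → ℝ be continuously differentiable with derivative u', with u and u' square-integrable on [0,∞) and ∫_0^∞ u(x)² dx = μ. Then E_6(u, [0,∞)) > 0 strictly. (Hence no function of mass strictly below μ_{ℝ⁺} attains the infimum 0 of the critical energy on the half-line.) -/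
/-!
For any weight `G` solving the Riccati equation `G' = 2 (k² + G²) u²` one has
`(u' + G u³)² = u'² - k² u⁶ + (G u⁴ / 2)'`, so integrating over the half-line gives
`k² ∫ u⁶ ≤ ∫ u'²` as long as the boundary term `G u⁴ / 2` vanishes at `0` and at infinity.
The equation is solved by `G = k tan (2 k ∫₀ˣ u²)`, which stays bounded on `[0, ∞)` when
`2 k μ < π / 2`; a mass `μ < √3 π / 4` leaves room for `k² > 1 / 3`, hence
`∫ u'² > (1 / 3) ∫ u⁶`, i.e. `E₆(u) > 0`.
-/

open MeasureTheory Set Filter Topology Real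

theorem tendsto_sq_atTop_of_integrableOn_sq {u u' : ℝ → ℝ} {a : ℝ}
    (hu : ∀ x ∈ Ioi a, HasDerivAt u (u' x) x) (hu' : ContinuousOn u' (Ioi a))
    (hu2 : IntegrableOn (fun x => u x ^ 2) (Ioi a))
    (hu'2 : IntegrableOn (fun x => u' x ^ 2) (Ioi a)) :
    Tendsto (fun x => u x ^ 2) atTop (𝓝 0) := by
  have huc : ContinuousOn u (Ioi a) := fun x hx => (hu x hx).continuousAt.continuousWithinAt
  have hprod : IntegrableOn (fun x => 2 * u x * u' x) (Ioi a) := by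
    refine Integrable.mono' (hu2.add hu'2)
      (ContinuousOn.aestronglyMeasurable (by fun_prop) measurableSet_Ioi) (ae_of_all _ fun x => ?_)
    rw [Real.norm_eq_abs, abs_mul, abs_mul, abs_two, Pi.add_apply, ← sq_abs (u x), ← sq_abs (u' x)]
    nlinarith [sq_nonneg (|u x| - |u' x|)]
  exact tendsto_zero_of_hasDerivAt_of_integrableOn_Ioi
    (fun x hx => ((hu x hx).pow 2).congr_deriv (by push_cast; ring)) hprod hu2

theorem sq_mul_intervalIntegral_pow_six_le {u u' G : ℝ → ℝ} {k a b : ℝ} (hab : a ≤ b)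
    (hu : ∀ x ∈ Icc a b, HasDerivAt u (u' x) x) (hu' : ContinuousOn u' (Icc a b))
    (hG : ∀ x ∈ Icc a b, HasDerivAt G (2 * (k ^ 2 + G x ^ 2) * u x ^ 2) x) :
    k ^ 2 * ∫ x in a..b, u x ^ 6 ≤
      (∫ x in a..b, u' x ^ 2) + G b * u b ^ 4 / 2 - G a * u a ^ 4 / 2 := by
  rw [← uIcc_of_le hab] at hu hu' hG
  have huc : ContinuousOn u (uIcc a b) := fun x hx => (hu x hx).continuousAt.continuousWithinAt
  have hGc : ContinuousOn G (uIcc a b) := fun x hx => (hG x hx).continuousAt.continuousWithinAt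
  have hΦ : ∀ x ∈ uIcc a b, HasDerivAt (fun y => G y * u y ^ 4 / 2)
      ((k ^ 2 + G x ^ 2) * u x ^ 6 + 2 * G x * u x ^ 3 * u' x) x := fun x hx =>
    (((hG x hx).mul ((hu x hx).pow 4)).div_const 2).congr_deriv
      (by simp only [Pi.pow_apply]; push_cast; ring)
  have hFTC := intervalIntegral.integral_eq_sub_of_hasDerivAt hΦ
    (ContinuousOn.intervalIntegrable (by fun_prop))
  have h6 : IntervalIntegrable (fun x => k ^ 2 * u x ^ 6) volume a b :=
    ContinuousOn.intervalIntegrable (by fun_prop)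
  have h2 : IntervalIntegrable (fun x => u' x ^ 2) volume a b :=
    ContinuousOn.intervalIntegrable (by fun_prop)
  have hsquare : ∫ x in a..b, (u' x + G x * u x ^ 3) ^ 2 =
      (∫ x in a..b, u' x ^ 2) - k ^ 2 * (∫ x in a..b, u x ^ 6) +
        (G b * u b ^ 4 / 2 - G a * u a ^ 4 / 2) := by
    rw [← hFTC, ← intervalIntegral.integral_const_mul, ← intervalIntegral.integral_sub h2 h6,
      ← intervalIntegral.integral_add (h2.sub h6) (ContinuousOn.intervalIntegrable (by fun_prop))]
    exact intervalIntegral.integral_congr fun x _ => by ring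
  have : 0 ≤ ∫ x in a..b, (u' x + G x * u x ^ 3) ^ 2 :=
    intervalIntegral.integral_nonneg hab fun x _ => sq_nonneg _
  linarith

theorem integrableOn_pow_six_and_sq_mul_integral_le {u u' G : ℝ → ℝ} {k K a : ℝ} (hk : k ≠ 0)
    (hu : ∀ x ∈ Ici a, HasDerivAt u (u' x) x) (hu' : ContinuousOn u' (Ici a))
    (hu2 : IntegrableOn (fun x => u x ^ 2) (Ici a))
    (hu'2 : IntegrableOn (fun x => u' x ^ 2) (Ici a))
    (hG : ∀ x ∈ Ici a, HasDerivAt G (2 * (k ^ 2 + G x ^ 2) * u x ^ 2) x)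
    (hGa : 0 ≤ G a) (hGK : ∀ x ∈ Ici a, |G x| ≤ K) :
    IntegrableOn (fun x => u x ^ 6) (Ici a) ∧
      k ^ 2 * ∫ x in Ici a, u x ^ 6 ≤ ∫ x in Ici a, u' x ^ 2 := by
  set D := ∫ x in Ici a, u' x ^ 2
  set Φ : ℝ → ℝ := fun x => G x * u x ^ 4 / 2
  have hΦ : Tendsto Φ atTop (𝓝 0) := by
    have hu0 := tendsto_sq_atTop_of_integrableOn_sq (fun x hx => hu x (Ioi_subset_Ici_self hx))
      (hu'.mono Ioi_subset_Ici_self) (hu2.mono_set Ioi_subset_Ici_self)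
      (hu'2.mono_set Ioi_subset_Ici_self)
    refine squeeze_zero_norm' ?_ (by simpa using (hu0.pow 2).const_mul (K / 2))
    filter_upwards [eventually_ge_atTop a] with x hx
    rw [Real.norm_eq_abs, abs_div, abs_mul, abs_two, abs_of_nonneg (by positivity : 0 ≤ u x ^ 4)]
    have := mul_le_mul_of_nonneg_right (hGK x hx) (by positivity : 0 ≤ u x ^ 4)
    linarith [show (u x ^ 2) ^ 2 = u x ^ 4 by ring]
  have hbound : ∀ᶠ T in atTop, k ^ 2 * ∫ x in a..T, u x ^ 6 ≤ D + Φ T := by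
    filter_upwards [eventually_ge_atTop a] with T hT
    have hsub : Icc a T ⊆ Ici a := Icc_subset_Ici_self
    have hle := sq_mul_intervalIntegral_pow_six_le hT (fun x hx => hu x (hsub hx))
      (hu'.mono hsub) (fun x hx => hG x (hsub hx))
    have hD : ∫ x in a..T, u' x ^ 2 ≤ D := by
      rw [intervalIntegral.integral_of_le hT]
      exact setIntegral_mono_set hu'2 (ae_of_all _ fun t => sq_nonneg _)
        (Ioc_subset_Ioi_self.trans Ioi_subset_Ici_self).eventuallyLE
    have : 0 ≤ G a * u a ^ 4 / 2 := by positivity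
    simp only [Φ]
    linarith
  have hu6 : IntegrableOn (fun x => u x ^ 6) (Ioi a) := by
    have huc : ContinuousOn u (Ici a) := fun x hx => (hu x hx).continuousAt.continuousWithinAt
    refine integrableOn_Ioi_of_intervalIntegral_norm_bounded ((D + 1) / k ^ 2) a
      (fun T => ?_) tendsto_id ?_
    · exact ((huc.mono Icc_subset_Ici_self).pow 6).integrableOn_Icc.mono_set Ioc_subset_Icc_self
    · filter_upwards [hbound, hΦ.eventually (eventually_le_nhds one_pos)] with T hT hΦT
      simp_rw [id, norm_pow, Real.norm_eq_abs, Even.pow_abs (by decide : Even 6)]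
      rw [le_div_iff₀ (by positivity)]
      linarith
  refine ⟨(integrableOn_Ici_iff_integrableOn_Ioi).2 hu6, ?_⟩
  rw [integral_Ici_eq_integral_Ioi]
  exact le_of_tendsto_of_tendsto
    ((intervalIntegral_tendsto_integral_Ioi a hu6 tendsto_id).const_mul (k ^ 2))
    (by simpa using tendsto_const_nhds.add hΦ) hbound

theorem hasDerivAt_mul_tan_mul {M : ℝ → ℝ} {m k x : ℝ} (hM : HasDerivAt M m x)
    (hcos : cos (2 * k * M x) ≠ 0) :
    HasDerivAt (fun y => k * tan (2 * k * M y))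
      (2 * (k ^ 2 + (k * tan (2 * k * M x)) ^ 2) * m) x := by
  refine (((Real.hasDerivAt_tan hcos).comp x (hM.const_mul (2 * k))).const_mul k).congr_deriv ?_
  rw [← inv_one_add_tan_sq hcos]
  field_simp

theorem exists_bounded_riccati_solution {u : ℝ → ℝ} {k a : ℝ} (hk : 0 ≤ k) (hu : Continuous u)
    (hu2 : IntegrableOn (fun x => u x ^ 2) (Ici a))
    (hmass : 4 * k * ∫ x in Ici a, u x ^ 2 < π) :
    ∃ G : ℝ → ℝ, ∃ K : ℝ, (∀ x ∈ Ici a, HasDerivAt G (2 * (k ^ 2 + G x ^ 2) * u x ^ 2) x) ∧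
      G a = 0 ∧ ∀ x ∈ Ici a, |G x| ≤ K := by
  set m := ∫ x in Ici a, u x ^ 2
  set M : ℝ → ℝ := fun x => ∫ t in a..x, u t ^ 2
  have hM : ∀ x, HasDerivAt M (u x ^ 2) x := fun x =>
    intervalIntegral.integral_hasDerivAt_right ((hu.pow 2).intervalIntegrable a x)
      (hu.pow 2).aestronglyMeasurable.stronglyMeasurableAtFilter (hu.pow 2).continuousAt
  have hMmem : ∀ x ∈ Ici a, 2 * k * M x ∈ Icc 0 (2 * k * m) := by
    intro x hx
    have hM0 : 0 ≤ M x := intervalIntegral.integral_nonneg hx fun t _ => sq_nonneg _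
    have hMm : M x ≤ m := by
      simp only [M, m, intervalIntegral.integral_of_le hx]
      exact setIntegral_mono_set hu2 (ae_of_all _ fun t => sq_nonneg _)
        (Ioc_subset_Ioi_self.trans Ioi_subset_Ici_self).eventuallyLE
    exact ⟨by positivity, by gcongr⟩
  have hmem : ∀ x ∈ Ici a, 2 * k * M x ∈ Ioo (-(π / 2)) (π / 2) := fun x hx =>
    ⟨by linarith [pi_pos, (hMmem x hx).1], by linarith [(hMmem x hx).2]⟩
  refine ⟨fun x => k * tan (2 * k * M x), k * tan (2 * k * m), fun x hx => ?_, by simp [M], ?_⟩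
  · exact hasDerivAt_mul_tan_mul (hM x) (cos_pos_of_mem_Ioo (hmem x hx)).ne'
  · intro x hx
    have htan : 0 ≤ tan (2 * k * M x) :=
      tan_nonneg_of_nonneg_of_le_pi_div_two (hMmem x hx).1 (hmem x hx).2.le
    rw [abs_of_nonneg (by positivity)]
    exact mul_le_mul_of_nonneg_left (strictMonoOn_tan.monotoneOn (hmem x hx)
      ⟨by linarith [pi_pos, (hMmem x hx).1, (hMmem x hx).2], by linarith⟩ (hMmem x hx).2) hk

theorem integral_pow_pos_of_integral_sq_pos {α : Type*} [MeasurableSpace α] {μ : Measure α}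
    {f : α → ℝ} {n : ℕ} (hn : Even n) (hn0 : n ≠ 0) (hfn : Integrable (fun x => f x ^ n) μ)
    (hf2 : 0 < ∫ x, f x ^ 2 ∂μ) : 0 < ∫ x, f x ^ n ∂μ := by
  have hnonneg : 0 ≤ fun x => f x ^ n := fun x => hn.pow_nonneg (f x)
  refine (integral_nonneg hnonneg).lt_of_ne fun h => hf2.ne' ?_
  have hzero : (fun x => f x ^ 2) =ᵐ[μ] 0 := by
    filter_upwards [(integral_eq_zero_iff_of_nonneg hnonneg hfn).1 h.symm] with x hx
    simp only [Pi.zero_apply, pow_eq_zero_iff hn0] at hx ⊢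
    simp [hx]
  simp [integral_congr_ae hzero]

theorem exists_sq_gt_third_of_lt_critical_mass {μ : ℝ} (hμ0 : 0 < μ) (hμ : μ < √3 * π / 4) :
    ∃ k : ℝ, 0 < k ∧ 1 < 3 * k ^ 2 ∧ 4 * k * μ < π := by
  have h3 : √3 ^ 2 = 3 := Real.sq_sqrt (by norm_num)
  have hs : 0 < √3 := by positivity
  refine ⟨(1 / √3 + π / (4 * μ)) / 2, by positivity, ?_, ?_⟩
  · have : 1 / √3 < π / (4 * μ) := by
      rw [div_lt_div_iff₀ hs (by positivity)]; nlinarith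
    have h1 : 1 / √3 < (1 / √3 + π / (4 * μ)) / 2 := by linarith
    have := mul_self_lt_mul_self (by positivity) h1
    field_simp at this ⊢
    nlinarith
  · field_simp
    nlinarith

/-- For `0 < μ < μ_{ℝ⁺} = √3 π / 4` and `u` continuously differentiable with `u, u'`
square-integrable on `[0,∞)` and mass `∫_0^∞ u² = μ`, the critical NLS energy on the
half-line is strictly positive: `E_6(u,[0,∞)) > 0`. -/
theorem critical_energy_strictly_positive_halfline
    (μ : ℝ) (hμ0 : 0 < μ) (hμ : μ < Real.sqrt 3 * Real.pi / 4)
    (u u' : ℝ → ℝ)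
    (hderiv : ∀ x, HasDerivAt u (u' x) x)
    (hcont : Continuous u')
    (hu2 : IntegrableOn (fun x => u x ^ 2) (Set.Ici 0))
    (hu'2 : IntegrableOn (fun x => u' x ^ 2) (Set.Ici 0))
    (hmass : ∫ x in Set.Ici (0 : ℝ), u x ^ 2 = μ) :
    (1 / 2) * (∫ x in Set.Ici (0 : ℝ), u' x ^ 2) -
      (1 / 6) * (∫ x in Set.Ici (0 : ℝ), |u x| ^ 6) > 0 := by
  obtain ⟨k, hk0, hk3, hkμ⟩ := exists_sq_gt_third_of_lt_critical_mass hμ0 hμ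
  have hu : Continuous u := continuous_iff_continuousAt.2 fun x => (hderiv x).continuousAt
  obtain ⟨G, K, hG, hG0, hGK⟩ :=
    exists_bounded_riccati_solution hk0.le hu hu2 (hmass ▸ hkμ)
  obtain ⟨hu6, hkinetic⟩ := integrableOn_pow_six_and_sq_mul_integral_le hk0.ne'
    (fun x _ => hderiv x) hcont.continuousOn hu2 hu'2 hG hG0.ge hGK
  have hpos : 0 < ∫ x in Ici 0, u x ^ 6 :=
    integral_pow_pos_of_integral_sq_pos (by decide) (by decide) hu6 (hmass ▸ hμ0)
  simp_rw [Even.pow_abs (by decide : Even 6)]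
  nlinarith
end

section
/- Let ℓ > 0 and let p be a real number with p ≥ 2. There exists a constant K > 0 (depending only on p and ℓ) such that for every continuously differentiable u : [0,ℓ] → ℝ with derivative u', ∫_0^ℓ |u(x)|^p dx ≤ K · (∫_0^ℓ u(x)² dx)^{(p+2)/4} · (∫_0^ℓ u(x)² dx + ∫_0^ℓ u'(x)² dx)^{(p−2)/4}. (Gagliardo–Nirenberg inequality on a compact interval, with the H¹-norm on the right-hand side.) -/
/-!
Write `A = ∫ u²` and `D = ∫ u'²`. The fundamental theorem of calculus for `u²`, between `x` and a
point where `u²` lies below its mean, gives `u(x)² ≤ A / ℓ + 2 ∫ |u u'|`, and by Cauchy–Schwarz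
`u(x)² ≤ A / ℓ + 2 √A √D ≤ (1/ℓ + 2) √A √(A + D)`. Hence
`∫ |u|^p ≤ ‖u‖_∞^(p-2) ∫ u² ≤ (1/ℓ + 2)^((p-2)/2) A^((p+2)/4) (A + D)^((p-2)/4)`.
-/

open MeasureTheory Set

theorem abs_rpow_le_rpow_mul_sq {x S p : ℝ} (hp : 2 ≤ p) (hx : x ^ 2 ≤ S) :
    |x| ^ p ≤ S ^ ((p - 2) / 2) * x ^ 2 := by
  have hsplit : |x| ^ p = (x ^ 2) ^ ((p - 2) / 2) * x ^ 2 := by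
    rw [← sq_abs, ← Real.rpow_natCast, ← Real.rpow_mul (abs_nonneg x),
      ← Real.rpow_add' (abs_nonneg x)]
    · congr 1; ring
    · linarith
  rw [hsplit]
  gcongr

theorem inv_mul_add_two_mul_sqrt_le {ℓ A D : ℝ} (hℓ : 0 < ℓ) (hA : 0 ≤ A) (hD : 0 ≤ D) :
    ℓ⁻¹ * A + 2 * (√A * √D) ≤ (ℓ⁻¹ + 2) * (√A * √(A + D)) := by
  have hA_le : A ≤ √A * √(A + D) := by
    rw [← Real.sqrt_mul hA]
    exact Real.le_sqrt_of_sq_le (by nlinarith)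
  have hD_le : √D ≤ √(A + D) := Real.sqrt_le_sqrt (by linarith)
  have hℓ_inv : 0 ≤ ℓ⁻¹ := by positivity
  nlinarith [mul_le_mul_of_nonneg_left hA_le hℓ_inv,
    mul_le_mul_of_nonneg_left hD_le (Real.sqrt_nonneg A)]

theorem mul_sqrt_mul_sqrt_rpow_mul_self {c A B p : ℝ} (hc : 0 ≤ c) (hA : 0 ≤ A) (hB : 0 ≤ B)
    (hp : 2 ≤ p) :
    (c * (√A * √B)) ^ ((p - 2) / 2) * A =
      c ^ ((p - 2) / 2) * A ^ ((p + 2) / 4) * B ^ ((p - 2) / 4) := by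
  rw [Real.sqrt_eq_rpow, Real.sqrt_eq_rpow, Real.mul_rpow hc (by positivity),
    Real.mul_rpow (by positivity) (by positivity), ← Real.rpow_mul hA, ← Real.rpow_mul hB]
  have hA' : A ^ ((p + 2) / 4) = A ^ (1 / 2 * ((p - 2) / 2)) * A := by
    rw [← Real.rpow_add_one' hA (by linarith)]; ring_nf
  rw [hA', show 1 / 2 * ((p - 2) / 2) = (p - 2) / 4 by ring]
  ring

section Integral

variable {α : Type*} [MeasurableSpace α] {μ : Measure α}

theorem integral_abs_mul_le_sqrt_mul_sqrt {f g : α → ℝ} (hf : MemLp f 2 μ) (hg : MemLp g 2 μ) :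
    ∫ a, |f a * g a| ∂μ ≤ √(∫ a, f a ^ 2 ∂μ) * √(∫ a, g a ^ 2 ∂μ) := by
  have hofReal : ENNReal.ofReal 2 = 2 := by norm_num
  have h := integral_mul_norm_le_Lp_mul_Lq Real.HolderConjugate.two_two
    (hofReal ▸ hf) (hofReal ▸ hg)
  simpa only [Real.norm_eq_abs, ← abs_mul, Real.rpow_two, sq_abs, Real.sqrt_eq_rpow] using h

theorem setIntegral_abs_rpow_le {s : Set α} {u : α → ℝ} {S p : ℝ} (hp : 2 ≤ p)
    (hs : MeasurableSet s) (hu : IntegrableOn (fun x ↦ u x ^ 2) s μ) (hS : ∀ x ∈ s, u x ^ 2 ≤ S) :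
    ∫ x in s, |u x| ^ p ∂μ ≤ S ^ ((p - 2) / 2) * ∫ x in s, u x ^ 2 ∂μ := by
  rw [← integral_const_mul]
  refine integral_mono_of_nonneg (.of_forall fun x ↦ by positivity) (hu.const_mul _) ?_
  filter_upwards [ae_restrict_mem hs] with x hx using abs_rpow_le_rpow_mul_sq hp (hS x hx)

end Integral

section Interval

variable {a b : ℝ} {u u' : ℝ → ℝ}

theorem sq_sub_sq_le_two_mul_integral_abs_mul
    (hder : ∀ x ∈ Icc a b, HasDerivWithinAt u (u' x) (Icc a b) x)
    (hu' : ContinuousOn u' (Icc a b)) {x y : ℝ} (hx : x ∈ Icc a b) (hy : y ∈ Icc a b) :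
    u x ^ 2 - u y ^ 2 ≤ 2 * ∫ t in Icc a b, |u t * u' t| := by
  have hu : ContinuousOn u (Icc a b) := fun t ht ↦ (hder t ht).continuousWithinAt
  have hsub : uIcc y x ⊆ Icc a b := uIcc_subset_Icc hy hx
  have hftc : ∫ t in y..x, 2 * (u t * u' t) = u x ^ 2 - u y ^ 2 := by
    refine intervalIntegral.integral_eq_sub_of_hasDeriv_right ((hu.pow 2).mono hsub)
      (fun t ht ↦ ?_) (((hu.mul hu').mono hsub).intervalIntegrable.const_mul 2)
    have ht' : t ∈ Ioo a b :=
      ⟨(le_min hy.1 hx.1).trans_lt ht.1, ht.2.trans_le (max_le hy.2 hx.2)⟩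
    have hd := ((hder t (Ioo_subset_Icc_self ht')).hasDerivAt (Icc_mem_nhds ht'.1 ht'.2)).pow 2
    convert hd.hasDerivWithinAt using 1
    push_cast; ring
  calc u x ^ 2 - u y ^ 2 = 2 * ∫ t in y..x, u t * u' t := by
        rw [← hftc, intervalIntegral.integral_const_mul]
    _ ≤ 2 * ‖∫ t in y..x, u t * u' t‖ := by gcongr; exact Real.le_norm_self _
    _ ≤ 2 * ∫ t in uIoc y x, ‖u t * u' t‖ := by
        gcongr; exact intervalIntegral.norm_integral_le_integral_norm_uIoc
    _ ≤ 2 * ∫ t in Icc a b, |u t * u' t| := by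
        gcongr
        refine setIntegral_mono_set (((hu.mul hu').abs).integrableOn_compact isCompact_Icc)
          (.of_forall fun _ ↦ abs_nonneg _) (uIoc_subset_uIcc.trans hsub).eventuallyLE

theorem sq_le_setAverage_add_two_mul_integral_abs_mul (hab : a < b)
    (hder : ∀ x ∈ Icc a b, HasDerivWithinAt u (u' x) (Icc a b) x)
    (hu' : ContinuousOn u' (Icc a b)) {x : ℝ} (hx : x ∈ Icc a b) :
    u x ^ 2 ≤ (⨍ t in Icc a b, u t ^ 2) + 2 * ∫ t in Icc a b, |u t * u' t| := by
  have hu : ContinuousOn u (Icc a b) := fun t ht ↦ (hder t ht).continuousWithinAt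
  obtain ⟨y, hy, hy_le⟩ := exists_le_setAverage (f := fun t ↦ u t ^ 2) (by simp [hab]) (by simp)
    ((hu.pow 2).integrableOn_compact (μ := volume) isCompact_Icc)
  linarith [sq_sub_sq_le_two_mul_integral_abs_mul hder hu' hx hy]

end Interval

/-- Gagliardo–Nirenberg inequality on a compact interval `[0,ℓ]`, with the `H¹`-norm
on the right-hand side: for real `p ≥ 2` there is `K > 0` (depending only on `p` and
`ℓ`) such that every `u` continuously differentiable on `[0,ℓ]` with derivative `u'`
satisfies `∫_0^ℓ |u|^p ≤ K (∫_0^ℓ u²)^{(p+2)/4} (∫_0^ℓ u² + ∫_0^ℓ (u')²)^{(p−2)/4}`. -/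
theorem gagliardo_nirenberg_interval (ℓ : ℝ) (hℓ : 0 < ℓ) (p : ℝ) (hp : 2 ≤ p) :
    ∃ K : ℝ, 0 < K ∧ ∀ u u' : ℝ → ℝ,
      (∀ x ∈ Set.Icc 0 ℓ, HasDerivWithinAt u (u' x) (Set.Icc 0 ℓ) x) →
      ContinuousOn u' (Set.Icc 0 ℓ) →
      ∫ x in Set.Icc 0 ℓ, |u x| ^ p ≤
        K * (∫ x in Set.Icc 0 ℓ, u x ^ 2) ^ ((p + 2) / 4) *
          ((∫ x in Set.Icc 0 ℓ, u x ^ 2) + ∫ x in Set.Icc 0 ℓ, u' x ^ 2) ^ ((p - 2) / 4) := by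
  refine ⟨(ℓ⁻¹ + 2) ^ ((p - 2) / 2), by positivity, fun u u' hder hu' ↦ ?_⟩
  have hu : ContinuousOn u (Icc 0 ℓ) := fun t ht ↦ (hder t ht).continuousWithinAt
  have memLp_two {f : ℝ → ℝ} (hf : ContinuousOn f (Icc 0 ℓ)) :
      MemLp f 2 (volume.restrict (Icc 0 ℓ)) :=
    (memLp_two_iff_integrable_sq (hf.aestronglyMeasurable measurableSet_Icc)).2
      ((hf.pow 2).integrableOn_compact isCompact_Icc)
  set A := ∫ x in Icc 0 ℓ, u x ^ 2
  set D := ∫ x in Icc 0 ℓ, u' x ^ 2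
  have hA : 0 ≤ A := setIntegral_nonneg measurableSet_Icc fun _ _ ↦ sq_nonneg _
  have hD : 0 ≤ D := setIntegral_nonneg measurableSet_Icc fun _ _ ↦ sq_nonneg _
  have hsup : ∀ x ∈ Icc 0 ℓ, u x ^ 2 ≤ (ℓ⁻¹ + 2) * (√A * √(A + D)) := fun x hx ↦ calc
    u x ^ 2 ≤ (⨍ t in Icc 0 ℓ, u t ^ 2) + 2 * ∫ t in Icc 0 ℓ, |u t * u' t| :=
      sq_le_setAverage_add_two_mul_integral_abs_mul hℓ hder hu' hx
    _ ≤ ℓ⁻¹ * A + 2 * (√A * √D) := by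
      rw [setAverage_eq, Real.volume_real_Icc, sub_zero, max_eq_left hℓ.le, smul_eq_mul]
      gcongr
      exact integral_abs_mul_le_sqrt_mul_sqrt (memLp_two hu) (memLp_two hu')
    _ ≤ (ℓ⁻¹ + 2) * (√A * √(A + D)) := inv_mul_add_two_mul_sqrt_le hℓ hA hD
  calc ∫ x in Icc 0 ℓ, |u x| ^ p ≤ ((ℓ⁻¹ + 2) * (√A * √(A + D))) ^ ((p - 2) / 2) * A :=
        setIntegral_abs_rpow_le hp measurableSet_Icc (memLp_two hu).integrable_sq hsup
    _ = (ℓ⁻¹ + 2) ^ ((p - 2) / 2) * A ^ ((p + 2) / 4) * (A + D) ^ ((p - 2) / 4) :=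
        mul_sqrt_mul_sqrt_rpow_mul_self (by positivity) hA (by positivity) hp
end
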